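/- All zeros of the n-th orthonormal polynomial p_n(μ, ·) with respect to a finite Borel measure μ with compact infinite support S in ℂ lie in the convex hull Co(S) of S (Fejér's theorem). -/

import Mathlib

/-!
If `p_n(z) = 0`, write `p_n = (X - z) q` with `deg q < n`. Orthogonality of `p_n` to `q` gives
`∫ (t - z) |q(t)|² dμ(t) = 0`, so `z` is the barycenter of the nonzero finite measure `|q|² dμ`,
which is carried by the support `S`. Barycenters lie in every closed convex set carrying the
measure, and `Co(S)` is closed because the convex hull of a compact set in finite dimension is
compact (Carathéodory).
-/

open MeasureTheory Polynomial Filter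

noncomputable section

/-- The (closed) support of a Borel measure on `ℂ`. -/
def msupp (μ : Measure ℂ) : Set ℂ := {z | ∀ U ∈ nhds z, μ U ≠ 0}

/-- `p` is the sequence of orthonormal polynomials for `μ`:
`p n` has degree `n`, positive (real) leading coefficient, and
`⟪p m, p n⟫_μ = δ_{m n}`. -/
def ONP (μ : Measure ℂ) (p : ℕ → Polynomial ℂ) : Prop :=
  (∀ n, (p n).natDegree = n) ∧
  (∀ n, 0 < ((p n).leadingCoeff).re ∧ ((p n).leadingCoeff).im = 0) ∧
  (∀ m n, ∫ z, (p m).eval z * (starRingEnd ℂ) ((p n).eval z) ∂μ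
      = if m = n then 1 else 0)

/-- The `n`-th Christoffel function of the measure `μ` at the point `z`. -/
def christoffel (μ : Measure ℂ) (n : ℕ) (z : ℂ) : ℝ :=
  sInf {r : ℝ | ∃ P : Polynomial ℂ, P.natDegree ≤ n ∧ P.eval z = 1 ∧
      r = ∫ t, ‖P.eval t‖ ^ 2 ∂μ}

open scoped NNReal ENNReal

section ConvexJoin
variable {E : Type*} [AddCommGroup E] [Module ℝ E]

def iterJoin (s : Set E) : ℕ → Set E
  | 0 => s
  | k + 1 => convexJoin ℝ s (iterJoin s k)

theorem subset_iterJoin (s : Set E) (k : ℕ) : s ⊆ iterJoin s k := by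
  induction k with
  | zero => exact subset_rfl
  | succ k ih => exact fun a ha => segment_subset_convexJoin ha (ih ha) (left_mem_segment ℝ a a)

theorem iterJoin_subset_convexHull (s : Set E) (k : ℕ) : iterJoin s k ⊆ convexHull ℝ s := by
  induction k with
  | zero => exact subset_convexHull ℝ s
  | succ k ih => exact convexJoin_subset (subset_convexHull ℝ s) ih (convex_convexHull ℝ s)

theorem convexHull_subset_iterJoin {s : Set E} {t : Finset E} (hts : ↑t ⊆ s) {k : ℕ}
    (hk : t.card ≤ k + 1) : convexHull ℝ ↑t ⊆ iterJoin s k := by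
  classical
  induction t using Finset.induction_on generalizing k with
  | empty => simp
  | insert a t hat ih =>
    rw [Finset.coe_insert] at hts ⊢
    rw [Finset.card_insert_of_notMem hat] at hk
    rcases t.eq_empty_or_nonempty with rfl | ht
    · simpa using subset_iterJoin s k (hts (Set.mem_insert a _))
    obtain ⟨k, rfl⟩ : ∃ k', k = k' + 1 :=
      Nat.exists_eq_add_one.mpr (by have := ht.card_pos; omega)
    rw [convexHull_insert (Finset.coe_nonempty.mpr ht)]
    exact convexJoin_mono (by simpa using hts (Set.mem_insert a _))
      (ih ((Set.subset_insert a _).trans hts) (by omega))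

-- Carathéodory: a point of the hull is a convex combination of at most `finrank + 1` points.
theorem convexHull_eq_iterJoin [FiniteDimensional ℝ E] (s : Set E) :
    convexHull ℝ s = iterJoin s (Module.finrank ℝ E) := by
  refine (iterJoin_subset_convexHull s _).antisymm' ?_
  rw [convexHull_eq_union]
  simp only [Set.iUnion_subset_iff]
  intro t hts ht
  have hcard := ht.card_le_finrank_succ
  have := Submodule.finrank_le (vectorSpan ℝ (Set.range ((↑) : t → E)))
  exact convexHull_subset_iterJoin hts (by simp only [Fintype.card_coe] at hcard; omega)

variable [TopologicalSpace E] [IsTopologicalAddGroup E] [ContinuousSMul ℝ E]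

theorem IsCompact.convexJoin {s t : Set E} (hs : IsCompact s) (ht : IsCompact t) :
    IsCompact (_root_.convexJoin ℝ s t) := by
  have hjoin : _root_.convexJoin ℝ s t =
      (fun x : E × E × ℝ => (1 - x.2.2) • x.1 + x.2.2 • x.2.1) '' s ×ˢ t ×ˢ Set.Icc 0 1 := by
    ext x
    simp only [mem_convexJoin, segment_eq_image, Set.mem_image, Set.mem_prod, Prod.exists]
    aesop
  rw [hjoin]
  exact (hs.prod (ht.prod isCompact_Icc)).image (by fun_prop)

theorem IsCompact.iterJoin {s : Set E} (hs : IsCompact s) (k : ℕ) : IsCompact (iterJoin s k) := by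
  induction k with
  | zero => exact hs
  | succ k ih => exact hs.convexJoin ih

theorem IsCompact.convexHull [FiniteDimensional ℝ E] {s : Set E} (hs : IsCompact s) :
    IsCompact (convexHull ℝ s) :=
  convexHull_eq_iterJoin s ▸ hs.iterJoin _

end ConvexJoin

section Barycenter
variable {α E : Type*} [MeasurableSpace α] [NormedAddCommGroup E] [NormedSpace ℝ E]
  [CompleteSpace E] {s : Set E} {f : α → E} {z : E}

theorem Convex.mem_of_integral_sub_eq_zero {ν : Measure α} [IsFiniteMeasure ν] [NeZero ν]
    (hs : Convex ℝ s) (hsc : IsClosed s) (hfs : ∀ᵐ x ∂ν, f x ∈ s) (hfi : Integrable f ν)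
    (h : ∫ x, (f x - z) ∂ν = 0) : z ∈ s := by
  have hν : ν.real Set.univ ≠ 0 := measureReal_univ_ne_zero
  rw [integral_sub hfi (integrable_const z), integral_const, sub_eq_zero] at h
  convert hs.average_mem hsc hfs hfi
  rw [average_eq, h, smul_smul, inv_mul_cancel₀ hν, one_smul]

theorem Convex.mem_of_integral_smul_sub_eq_zero {μ : Measure α} (hs : Convex ℝ s)
    (hsc : IsClosed s) {w : α → ℝ≥0} (hw : Measurable w)
    (hwi : Integrable (fun x ↦ (w x : ℝ)) μ)
    (hw0 : 0 < ∫ x, (w x : ℝ) ∂μ) (hfs : ∀ᵐ x ∂μ, f x ∈ s)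
    (hfi : Integrable (fun x ↦ w x • f x) μ) (h : ∫ x, w x • (f x - z) ∂μ = 0) :
    z ∈ s := by
  set ν := μ.withDensity fun x ↦ (w x : ℝ≥0∞)
  have hw1 (x : α) : w x • (1 : ℝ) = w x := by rw [NNReal.smul_def, smul_eq_mul, mul_one]
  have : IsFiniteMeasure ν :=
    (integrable_const_iff_isFiniteMeasure (one_ne_zero (α := ℝ))).mp <|
    (integrable_withDensity_iff_integrable_smul hw).mpr (by simpa only [hw1] using hwi)
  have : NeZero ν := ⟨fun hν ↦ by
    have := integral_withDensity_eq_integral_smul hw (μ := μ) fun _ ↦ (1 : ℝ)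
    simp only [hw1] at this
    change ∫ _, _ ∂ν = _ at this
    rw [hν, integral_zero_measure] at this
    exact hw0.ne this⟩
  refine hs.mem_of_integral_sub_eq_zero hsc (withDensity_absolutelyContinuous μ _ |>.ae_le hfs)
    ((integrable_withDensity_iff_integrable_smul hw).mpr hfi) ?_
  rwa [integral_withDensity_eq_integral_smul hw]

end Barycenter

theorem msupp_eq_support (μ : Measure ℂ) : msupp μ = μ.support := by
  ext z
  simp [msupp, Measure.mem_support_iff_forall, pos_iff_ne_zero]

theorem ae_mem_msupp (μ : Measure ℂ) : ∀ᵐ z ∂μ, z ∈ msupp μ :=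
  msupp_eq_support μ ▸ Measure.support_mem_ae

section Msupp
variable {μ : Measure ℂ} [IsFiniteMeasure μ]

theorem Continuous.integrable_of_isCompact_msupp {E : Type*} [NormedAddCommGroup E] {f : ℂ → E}
    (hf : Continuous f) (hc : IsCompact (msupp μ)) : Integrable f μ := by
  rw [← Measure.restrict_eq_self_of_ae_mem (ae_mem_msupp μ)]
  exact hf.continuousOn.integrableOn_compact hc

theorem integral_pos_of_mem_msupp {g : ℂ → ℝ} (hg : Continuous g) (hg0 : 0 ≤ g)
    (hc : IsCompact (msupp μ)) {z : ℂ} (hz : z ∈ msupp μ) (hgz : g z ≠ 0) :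
    0 < ∫ t, g t ∂μ := by
  rw [integral_pos_iff_support_of_nonneg hg0 (hg.integrable_of_isCompact_msupp hc),
    pos_iff_ne_zero]
  exact hz _ ((isOpen_ne.preimage hg).mem_nhds hgz)

theorem integral_norm_eval_sq_pos (hc : IsCompact (msupp μ)) (hi : (msupp μ).Infinite)
    {q : ℂ[X]} (hq : q ≠ 0) : 0 < ∫ t, ‖q.eval t‖ ^ 2 ∂μ := by
  obtain ⟨z, hz, hqz⟩ := (hi.sdiff (finite_setOfPred_isRoot hq)).nonempty
  exact integral_pos_of_mem_msupp (by fun_prop) (fun _ ↦ by positivity) hc hz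
    (pow_ne_zero 2 (norm_ne_zero_iff.mpr hqz))

end Msupp

namespace ONP
variable {μ : Measure ℂ} {p : ℕ → ℂ[X]}

theorem leadingCoeff_ne_zero (hp : ONP μ p) (n : ℕ) : (p n).leadingCoeff ≠ 0 := fun h ↦ by
  simpa [h] using (hp.2.1 n).1

theorem ne_zero (hp : ONP μ p) (n : ℕ) : p n ≠ 0 :=
  Polynomial.leadingCoeff_ne_zero.mp (hp.leadingCoeff_ne_zero n)

def sequence (hp : ONP μ p) : Polynomial.Sequence ℂ where
  elems' := p
  degree_eq' n := by rw [degree_eq_natDegree (hp.ne_zero n), hp.1 n]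

theorem integral_mul_conj_eq_zero [IsFiniteMeasure μ] (hp : ONP μ p) (hc : IsCompact (msupp μ))
    {n : ℕ} {r : ℂ[X]} (hr : r.degree < n) :
    ∫ t, (p n).eval t * starRingEnd ℂ (r.eval t) ∂μ = 0 := by
  have hint (r : ℂ[X]) : Integrable (fun t ↦ r.eval t * starRingEnd ℂ ((p n).eval t)) μ :=
    Continuous.integrable_of_isCompact_msupp (by fun_prop) hc
  let L : ℂ[X] →ₗ[ℂ] ℂ :=
    { toFun r := ∫ t, r.eval t * starRingEnd ℂ ((p n).eval t) ∂μ
      map_add' r s := by simp only [eval_add, add_mul, integral_add (hint r) (hint s)]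
      map_smul' c r := by simp only [eval_smul, smul_eq_mul, mul_assoc, integral_const_mul,
        RingHom.id_apply] }
  have hspan : degreeLT ℂ n ≤ LinearMap.ker L := by
    rw [← hp.sequence.span_degreeLT fun i _ ↦ (hp.leadingCoeff_ne_zero i).isUnit,
      Submodule.span_le]
    rintro _ ⟨k, hk, rfl⟩
    exact (hp.2.2 k n).trans (if_neg (Set.mem_Iio.mp hk).ne)
  have hL : L r = 0 := hspan (mem_degreeLT.mpr hr)
  calc ∫ t, (p n).eval t * starRingEnd ℂ (r.eval t) ∂μ
      = starRingEnd ℂ (L r) := by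
        rw [LinearMap.coe_mk, AddHom.coe_mk, ← integral_conj]
        simp only [map_mul, Complex.conj_conj, mul_comm]
    _ = 0 := by rw [hL, map_zero]

end ONP

/-- Fejér's theorem: all zeros of the orthonormal polynomials lie in the convex hull
of the support of the measure of orthogonality. -/
theorem stmt_13 (μ : Measure ℂ) [IsFiniteMeasure μ]
    (hc : IsCompact (msupp μ)) (hi : (msupp μ).Infinite)
    (p : ℕ → Polynomial ℂ) (hp : ONP μ p) :
    ∀ (n : ℕ) (z : ℂ), (p n).eval z = 0 → z ∈ convexHull ℝ (msupp μ) := by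
  intro n z hz
  obtain ⟨q, hpq⟩ : X - C z ∣ p n := dvd_iff_isRoot.mpr hz
  have hq : q ≠ 0 := by
    rintro rfl
    exact hp.ne_zero n (by rw [hpq, mul_zero])
  have hqn : q.degree < n := by
    have hdeg := congrArg natDegree hpq
    rw [natDegree_mul (X_sub_C_ne_zero z) hq, natDegree_X_sub_C, hp.1 n] at hdeg
    rw [degree_eq_natDegree hq]
    exact_mod_cast (by omega : q.natDegree < n)
  have hw (t : ℂ) :
      (‖q.eval t‖₊ ^ 2 : ℝ≥0) • (t - z) = (p n).eval t * starRingEnd ℂ (q.eval t) := by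
    rw [hpq, eval_mul, mul_assoc, Complex.mul_conj, Complex.normSq_eq_norm_sq, NNReal.smul_def]
    simp [mul_comm]
  refine (convex_convexHull ℝ _).mem_of_integral_smul_sub_eq_zero hc.convexHull.isClosed
    (w := fun t ↦ ‖q.eval t‖₊ ^ 2) (by fun_prop)
    (Continuous.integrable_of_isCompact_msupp (by fun_prop) hc)
    (by simpa using integral_norm_eval_sq_pos hc hi hq)
    ((ae_mem_msupp μ).mono fun t ht ↦ subset_convexHull ℝ _ ht)
    (Continuous.integrable_of_isCompact_msupp (by fun_prop) hc) ?_
  simpa only [hw] using hp.integral_mul_conj_eq_zero hc hqn
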